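/- Let u : P → Q be a Kummer homomorphism of saturated commutative monoids and let R be a commutative ring. Then there is an isomorphism of R-algebras R[Q ⊕_P^sat Q] ≅ R[Q] ⊗_R R[Q^gp/P^gp], where R[−] denotes the monoid algebra over R; under the identification Q ⊕_P^sat Q ≅ Q ⊕ (Q^gp/P^gp), the isomorphism is induced by the decomposition of the monoid into the direct sum of Q and Q^gp/P^gp. -/

import Mathlib

/-!
Sending the class of `(g₁, g₂)` to `(g₁ + g₂, ḡ₂)` identifies `Q^gp ⊕_{P^gp} Q^gp` with
`Q^gp × Q^gp/P^gp`. Since `u` is Kummer, `Q^gp/P^gp` is torsion, so a class lies in the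
saturated pushout exactly when some multiple of `g₁ + g₂` lies in `Q`, that is, by saturation of
`Q`, when `g₁ + g₂ ∈ Q`. Hence `Q ⊕_P^sat Q ≅ Q × Q^gp/P^gp`, and the monoid algebra of a product
is the tensor product of the monoid algebras.
-/

open scoped TensorProduct

noncomputable section

/-- The subgroup `{(u^gp x, -u^gp x) : x ∈ P^gp}` of `Q^gp × Q^gp`; the pushout
`Q^gp ⊕_{P^gp} Q^gp` is the quotient by this subgroup. -/
def pushKer {GP GQ : Type*} [AddCommGroup GP] [AddCommGroup GQ]
    (ugp : GP →+ GQ) : AddSubgroup (GQ × GQ) :=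
  (ugp.prod (-ugp)).range

/-- The saturated pushout `Q ⊕_P^sat Q`: the submonoid of `Q^gp ⊕_{P^gp} Q^gp`
consisting of the classes `ξ` such that `m • ξ` lies in the image of `Q × Q` for some
integer `m > 0`. -/
def satPushout {Q GP GQ : Type*} [AddCancelCommMonoid Q]
    [AddCommGroup GP] [AddCommGroup GQ]
    (ιQ : Q →+ GQ) (ugp : GP →+ GQ) :
    AddSubmonoid ((GQ × GQ) ⧸ pushKer ugp) where
  carrier := {ξ | ∃ m : ℕ, 0 < m ∧ ∃ a b : Q,
    m • ξ = QuotientAddGroup.mk' (pushKer ugp) (ιQ a, ιQ b)}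
  zero_mem' := ⟨1, one_pos, 0, 0, by simp; exact (QuotientAddGroup.mk_zero _).symm⟩
  add_mem' := by
    rintro ξ η ⟨m, hm, a, b, h⟩ ⟨k, hk, c, d, h'⟩
    refine ⟨m * k, Nat.mul_pos hm hk, k • a + m • c, k • b + m • d, ?_⟩
    have h1 : (m * k) • (ξ + η) = k • (m • ξ) + m • (k • η) := by
      have h2 := smul_add (m * k) ξ η
      rw [h2, ← mul_smul, ← mul_smul, mul_comm k m]
    rw [h1, h, h', ← map_nsmul, ← map_nsmul, ← map_add]
    congr 1
    simp [Prod.ext_iff, map_add, map_nsmul]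

namespace AddMonoidAlgebra

variable (R M N : Type*) [CommSemiring R] [AddCommMonoid M] [AddCommMonoid N]

def prodTensorAlgEquiv : AddMonoidAlgebra R (M × N) ≃ₐ[R]
    AddMonoidAlgebra R M ⊗[R] AddMonoidAlgebra R N :=
  AlgEquiv.ofLinearEquiv (tensorEquiv R).symm
    (by simp [one_def, tensorEquiv_symm_single_eq_single_zero_tmul, Algebra.TensorProduct.one_def])
    (by
      intro x y
      induction x using induction_linear with
      | zero => simp
      | add => simp_all [add_mul]
      | single a r =>
        induction y using induction_linear with
        | zero => simp
        | add => simp_all [mul_add]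
        | single b s => simp [single_mul_single, tensorEquiv_symm_single_eq_single_zero_tmul])

variable {R M N} in
@[simp]
theorem prodTensorAlgEquiv_single (p : M × N) (r : R) :
    prodTensorAlgEquiv R M N (single p r) = single p.1 1 ⊗ₜ single p.2 r :=
  tensorEquiv_symm_single_eq_single_zero_tmul p r

end AddMonoidAlgebra

section Pushout

variable {G H : Type*} [AddCommGroup G] [AddCommGroup H]

def pushoutCoords (f : G →+ H) : H × H →+ H × (H ⧸ f.range) :=
  (AddMonoidHom.fst H H + AddMonoidHom.snd H H).prod
    ((QuotientAddGroup.mk' f.range).comp (AddMonoidHom.snd H H))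

theorem pushoutCoords_surjective (f : G →+ H) : Function.Surjective (pushoutCoords f) := by
  rintro ⟨g, c⟩
  obtain ⟨h, rfl⟩ := QuotientAddGroup.mk'_surjective f.range c
  exact ⟨(g - h, h), by simp [pushoutCoords]⟩

theorem ker_pushoutCoords (f : G →+ H) : (pushoutCoords f).ker = pushKer f := by
  ext ⟨g₁, g₂⟩
  simp only [AddMonoidHom.mem_ker, pushoutCoords, pushKer, AddMonoidHom.mem_range,
    AddMonoidHom.prod_apply, AddMonoidHom.add_apply, AddMonoidHom.coe_fst, AddMonoidHom.coe_snd,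
    AddMonoidHom.coe_comp, Function.comp_apply, QuotientAddGroup.mk'_apply,
    QuotientAddGroup.eq_zero_iff, AddMonoidHom.neg_apply, Prod.mk_eq_zero, Prod.mk.injEq]
  constructor
  · rintro ⟨hsum, x, rfl⟩
    exact ⟨-x, by rw [map_neg]; exact (eq_neg_of_add_eq_zero_left hsum).symm, by simp⟩
  · rintro ⟨x, rfl, rfl⟩
    exact ⟨add_neg_cancel _, -x, map_neg f x⟩

def pushoutEquiv (f : G →+ H) : (H × H) ⧸ pushKer f ≃+ H × (H ⧸ f.range) :=
  (QuotientAddGroup.quotientAddEquivOfEq (ker_pushoutCoords f)).symm.trans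
    (QuotientAddGroup.quotientKerEquivOfSurjective _ (pushoutCoords_surjective f))

@[simp]
theorem pushoutEquiv_mk (f : G →+ H) (g₁ g₂ : H) :
    pushoutEquiv f (QuotientAddGroup.mk' (pushKer f) (g₁, g₂)) =
      (g₁ + g₂, QuotientAddGroup.mk' f.range g₂) :=
  rfl

end Pushout

theorem isAddTorsion_quotient_range_of_kummer {P Q GP GQ : Type*} [AddCommMonoid P]
    [AddCommMonoid Q] [AddCommGroup GP] [AddCommGroup GQ] {ιP : P →+ GP} {ιQ : Q →+ GQ}
    {u : P →+ Q} {ugp : GP →+ GQ}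
    (hgpQ : ∀ g : GQ, ∃ a b : Q, g = ιQ a - ιQ b)
    (hkummer : ∀ q : Q, ∃ n : ℕ, 0 < n ∧ ∃ x : P, n • q = u x)
    (hugp : ∀ x : P, ugp (ιP x) = ιQ (u x)) :
    IsAddTorsion (GQ ⧸ ugp.range) := by
  have hQ (q : Q) : IsOfFinAddOrder (QuotientAddGroup.mk' ugp.range (ιQ q)) := by
    obtain ⟨n, hn, x, hx⟩ := hkummer q
    refine isOfFinAddOrder_iff_nsmul_eq_zero.2 ⟨n, hn, ?_⟩
    rw [← map_nsmul, ← map_nsmul, hx, ← hugp, QuotientAddGroup.mk'_apply,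
      QuotientAddGroup.eq_zero_iff]
    exact ⟨_, rfl⟩
  intro c
  obtain ⟨g, rfl⟩ := QuotientAddGroup.mk'_surjective ugp.range c
  obtain ⟨a, b, rfl⟩ := hgpQ g
  rw [map_sub, sub_eq_add_neg]
  exact (hQ a).add (hQ b).neg

theorem mem_satPushout_iff {Q GP GQ : Type*} [AddCancelCommMonoid Q] [AddCommGroup GP]
    [AddCommGroup GQ] {ιQ : Q →+ GQ} {ugp : GP →+ GQ}
    (hsatQ : ∀ g : GQ, ∀ n : ℕ, 0 < n → (∃ a : Q, n • g = ιQ a) → ∃ a : Q, g = ιQ a)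
    (htors : IsAddTorsion (GQ ⧸ ugp.range)) (ξ : (GQ × GQ) ⧸ pushKer ugp) :
    ξ ∈ satPushout ιQ ugp ↔ (pushoutEquiv ugp ξ).1 ∈ Set.range ιQ := by
  constructor
  · rintro ⟨m, hm, a, b, h⟩
    have hsum : m • (pushoutEquiv ugp ξ).1 = ιQ (a + b) := by
      rw [← Prod.smul_fst, ← map_nsmul, h, pushoutEquiv_mk, map_add]
    obtain ⟨q, hq⟩ := hsatQ _ m hm ⟨a + b, hsum⟩
    exact ⟨q, hq.symm⟩
  · rintro ⟨q, hq⟩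
    obtain ⟨m, hm, htm⟩ := isOfFinAddOrder_iff_nsmul_eq_zero.1 (htors (pushoutEquiv ugp ξ).2)
    refine ⟨m, hm, m • q, 0, (pushoutEquiv ugp).injective ?_⟩
    rw [map_nsmul, pushoutEquiv_mk, map_zero, add_zero, map_nsmul, hq, map_zero]
    exact Prod.ext rfl htm

section SubmonoidProd

variable {A B C Q : Type*} [AddMonoid A] [AddMonoid B] [AddMonoid C] [AddMonoid Q]

def AddSubmonoid.prodEquivOfMemIff (S : AddSubmonoid A) (e : A ≃+ B × C) {ι : Q →+ B}
    (hι : Function.Injective ι) (hS : ∀ a, a ∈ S ↔ (e a).1 ∈ Set.range ι) : S ≃+ Q × C :=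
  let φ : Q × C →+ S := AddMonoidHom.codRestrict
    (e.symm.toAddMonoidHom.comp (ι.prodMap (AddMonoidHom.id C))) S
    fun p ↦ (hS _).2 ⟨p.1, by simp⟩
  (AddEquiv.ofBijective φ ⟨fun _ _ h ↦
      (hι.prodMap Function.injective_id) (e.symm.injective (congrArg Subtype.val h)),
    fun s ↦ by
      obtain ⟨q, hq⟩ := (hS s).1 s.2
      exact ⟨(q, (e s).2), Subtype.ext (e.symm_apply_eq.2 (by simp [hq]))⟩⟩).symm

theorem AddSubmonoid.prodEquivOfMemIff_spec (S : AddSubmonoid A) (e : A ≃+ B × C) {ι : Q →+ B}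
    (hι : Function.Injective ι) (hS : ∀ a, a ∈ S ↔ (e a).1 ∈ Set.range ι) (s : S) :
    (ι (S.prodEquivOfMemIff e hι hS s).1, (S.prodEquivOfMemIff e hι hS s).2) = e s := by
  obtain ⟨p, rfl⟩ := (S.prodEquivOfMemIff e hι hS).symm.surjective s
  rw [AddEquiv.apply_symm_apply]
  exact (e.apply_symm_apply (ι p.1, p.2)).symm

end SubmonoidProd

theorem monoidAlgebra_saturated_pushout_tensor_decomposition_general
    {P Q GP GQ : Type*} [AddCancelCommMonoid P] [AddCancelCommMonoid Q]
    [AddCommGroup GP] [AddCommGroup GQ]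
    (R : Type*) [CommRing R]
    (ιP : P →+ GP) (ιQ : Q →+ GQ)
    (hιQ : Function.Injective ιQ)
    (hgpQ : ∀ g : GQ, ∃ a b : Q, g = ιQ a - ιQ b)
    (hsatQ : ∀ g : GQ, ∀ n : ℕ, 0 < n → (∃ a : Q, n • g = ιQ a) → ∃ a : Q, g = ιQ a)
    (u : P →+ Q)
    (hkummer : ∀ q : Q, ∃ n : ℕ, 0 < n ∧ ∃ x : P, n • q = u x)
    (ugp : GP →+ GQ) (hugp : ∀ x : P, ugp (ιP x) = ιQ (u x)) :
    ∃ (ψ : ↥(satPushout ιQ ugp) ≃+ Q × (GQ ⧸ ugp.range))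
      (e : AddMonoidAlgebra R ↥(satPushout ιQ ugp) ≃ₐ[R]
        (AddMonoidAlgebra R Q ⊗[R] AddMonoidAlgebra R (GQ ⧸ ugp.range))),
      (∀ (ξ : ↥(satPushout ιQ ugp)) (g₁ g₂ : GQ),
        (ξ : (GQ × GQ) ⧸ pushKer ugp) = QuotientAddGroup.mk' (pushKer ugp) (g₁, g₂) →
        ιQ (ψ ξ).1 = g₁ + g₂ ∧ (ψ ξ).2 = QuotientAddGroup.mk' ugp.range g₂) ∧
      (∀ s : ↥(satPushout ιQ ugp),
        e (AddMonoidAlgebra.single s 1) =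
          AddMonoidAlgebra.single (ψ s).1 1 ⊗ₜ[R] AddMonoidAlgebra.single (ψ s).2 1) := by
  have htors := isAddTorsion_quotient_range_of_kummer hgpQ hkummer hugp
  let ψ := (satPushout ιQ ugp).prodEquivOfMemIff (pushoutEquiv ugp) hιQ
    (mem_satPushout_iff hsatQ htors)
  refine ⟨ψ, (AddMonoidAlgebra.domCongr R R ψ).trans (AddMonoidAlgebra.prodTensorAlgEquiv R _ _),
    fun ξ g₁ g₂ hξ ↦ ?_, fun s ↦ ?_⟩
  · have hψ := AddSubmonoid.prodEquivOfMemIff_spec _ _ hιQ (mem_satPushout_iff hsatQ htors) ξ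
    rwa [hξ, pushoutEquiv_mk, Prod.mk.injEq] at hψ
  · rw [AlgEquiv.trans_apply, AddMonoidAlgebra.domCongr_single,
      AddMonoidAlgebra.prodTensorAlgEquiv_single]

/-- Let `u : P → Q` be a Kummer homomorphism of saturated commutative
monoids, with group completions `ιP : P →+ GP`, `ιQ : Q →+ GQ` and induced map
`ugp : GP →+ GQ`, and let `R` be a commutative ring.  Then there is an `R`-algebra
isomorphism `R[Q ⊕_P^sat Q] ≅ R[Q] ⊗_R R[Q^gp/P^gp]`; under the identification
`Q ⊕_P^sat Q ≅ Q ⊕ (Q^gp/P^gp)`, `(class of (g₁, g₂)) ↦ (q, ḡ₂)` with `ιQ q = g₁ + g₂`,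
the isomorphism is induced by the decomposition of the monoid into the direct sum. -/
theorem monoidAlgebra_saturated_pushout_tensor_decomposition
    {P Q GP GQ : Type*} [AddCancelCommMonoid P] [AddCancelCommMonoid Q]
    [AddCommGroup GP] [AddCommGroup GQ]
    (R : Type*) [CommRing R]
    (ιP : P →+ GP) (ιQ : Q →+ GQ)
    (hιP : Function.Injective ιP) (hιQ : Function.Injective ιQ)
    (hgpP : ∀ g : GP, ∃ a b : P, g = ιP a - ιP b)
    (hgpQ : ∀ g : GQ, ∃ a b : Q, g = ιQ a - ιQ b)
    (hsatP : ∀ g : GP, ∀ n : ℕ, 0 < n → (∃ a : P, n • g = ιP a) → ∃ a : P, g = ιP a)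
    (hsatQ : ∀ g : GQ, ∀ n : ℕ, 0 < n → (∃ a : Q, n • g = ιQ a) → ∃ a : Q, g = ιQ a)
    (u : P →+ Q) (huinj : Function.Injective u)
    (hkummer : ∀ q : Q, ∃ n : ℕ, 0 < n ∧ ∃ x : P, n • q = u x)
    (ugp : GP →+ GQ) (hugp : ∀ x : P, ugp (ιP x) = ιQ (u x)) :
    ∃ (ψ : ↥(satPushout ιQ ugp) ≃+ Q × (GQ ⧸ ugp.range))
      (e : AddMonoidAlgebra R ↥(satPushout ιQ ugp) ≃ₐ[R]
        (AddMonoidAlgebra R Q ⊗[R] AddMonoidAlgebra R (GQ ⧸ ugp.range))),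
      (∀ (ξ : ↥(satPushout ιQ ugp)) (g₁ g₂ : GQ),
        (ξ : (GQ × GQ) ⧸ pushKer ugp) = QuotientAddGroup.mk' (pushKer ugp) (g₁, g₂) →
        ιQ (ψ ξ).1 = g₁ + g₂ ∧ (ψ ξ).2 = QuotientAddGroup.mk' ugp.range g₂) ∧
      (∀ s : ↥(satPushout ιQ ugp),
        e (AddMonoidAlgebra.single s 1) =
          AddMonoidAlgebra.single (ψ s).1 1 ⊗ₜ[R] AddMonoidAlgebra.single (ψ s).2 1) :=
  monoidAlgebra_saturated_pushout_tensor_decomposition_general R ιP ιQ hιQ hgpQ hsatQ u hkummer ugp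
    hugp

end
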